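/- arXiv:2402.11053 — 5 statements merged into one kernel-verified Lean document; each statement's English description precedes it below -/
import Mathlib

section
/- Let ψ : ℝ → ℝ be convex. Suppose x, z ∈ ℝ are such that for every x' ∈ ℝ and every subgradient z' of ψ at x' one has (x − x')·(z − z') ≥ 0. Then z is a subgradient of ψ at x (i.e., the subdifferential of a finite convex function on ℝ is maximally monotone). -/
open Set

/-- Every point of a convex function on ℝ has a subgradient: the sup of left slopes. -/
lemma exists_subgrad (ψ : ℝ → ℝ) (hψ : ConvexOn ℝ Set.univ ψ) (p : ℝ) :
    ∃ g : ℝ, ∀ y : ℝ, ψ p + g * (y - p) ≤ ψ y := by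
  set S : Set ℝ := slope ψ p '' Set.Iio p with hS
  have hne : S.Nonempty := ⟨slope ψ p (p - 1), ⟨p - 1, by norm_num, rfl⟩⟩
  have hub : ∀ q > p, slope ψ p q ∈ upperBounds S := by
    rintro q hq _ ⟨a, ha, rfl⟩
    have := hψ.slope_mono_adjacent (x := a) (y := p) (z := q) trivial trivial ha hq
    rw [slope_comm ψ p a, slope_def_field, slope_def_field]; exact this
  have hbdd : BddAbove S := ⟨slope ψ p (p + 1), hub (p + 1) (by norm_num)⟩
  refine ⟨sSup S, fun y => ?_⟩
  rcases lt_trichotomy y p with hy | rfl | hy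
  · have hmem : slope ψ p y ∈ S := ⟨y, hy, rfl⟩
    have h1 : slope ψ p y ≤ sSup S := le_csSup hbdd hmem
    have : sSup S * (y - p) ≤ slope ψ p y * (y - p) := by
      apply mul_le_mul_of_nonpos_right h1 (by linarith)
    rw [slope_def_field, div_mul_cancel₀] at this
    · linarith
    · exact sub_ne_zero.mpr (ne_of_lt hy)
  · simp
  · have h1 : sSup S ≤ slope ψ p y := csSup_le hne (hub y hy)
    have : sSup S * (y - p) ≤ slope ψ p y * (y - p) := by
      apply mul_le_mul_of_nonneg_right h1 (by linarith)
    rw [slope_def_field, div_mul_cancel₀] at this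
    · linarith
    · exact sub_ne_zero.mpr (ne_of_gt hy)

/-- The subdifferential of a finite convex function on ℝ is maximally monotone:
if `(x - x') * (z - z') ≥ 0` for every point `x'` and every subgradient `z'` of `ψ`
at `x'`, then `z` is a subgradient of `ψ` at `x`. -/
theorem subdifferential_maximally_monotone
    (ψ : ℝ → ℝ) (hψ : ConvexOn ℝ Set.univ ψ) (x z : ℝ)
    (h : ∀ x' z' : ℝ, (∀ y : ℝ, ψ x' + z' * (y - x') ≤ ψ y) → (x - x') * (z - z') ≥ 0) :
    ∀ y : ℝ, ψ x + z * (y - x) ≤ ψ y := by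
  have hcont : Continuous ψ := by
    exact continuousOn_univ.mp (hψ.continuousOn isOpen_univ)
  intro y
  rcases eq_or_ne y x with rfl | hyx
  · simp
  rcases hyx.lt_or_gt with hy | hy
  -- y < x : use c ∈ (y, x), c → x⁻
  · have hev : ∀ c ∈ Ioo y x, ψ c + z * (y - c) ≤ ψ y := by
      intro c hc
      obtain ⟨g, hg⟩ := exists_subgrad ψ hψ c
      have hmono := h c g hg
      have hzg : g ≤ z := by nlinarith [hc.2]
      have := hg y
      nlinarith [hc.1]
    have hlim : Filter.Tendsto (fun c => ψ c + z * (y - c)) (nhdsWithin x (Ioo y x))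
        (nhds (ψ x + z * (y - x))) := by
      apply Filter.Tendsto.mono_left _ nhdsWithin_le_nhds
      exact (hcont.tendsto x).add ((continuous_const.mul
        (continuous_const.sub continuous_id)).tendsto x)
    have hne : (nhdsWithin x (Ioo y x)).NeBot := by
      apply mem_closure_iff_nhdsWithin_neBot.mp
      rw [closure_Ioo (ne_of_lt hy)]
      exact ⟨le_of_lt hy, le_refl x⟩
    have := le_of_tendsto hlim (Filter.eventually_of_mem self_mem_nhdsWithin hev)
    linarith
  -- x < y : use c ∈ (x, y), c → x⁺
  · have hev : ∀ c ∈ Ioo x y, ψ c + z * (y - c) ≤ ψ y := by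
      intro c hc
      obtain ⟨g, hg⟩ := exists_subgrad ψ hψ c
      have hmono := h c g hg
      have hzg : z ≤ g := by nlinarith [hc.1]
      have := hg y
      nlinarith [hc.2]
    have hlim : Filter.Tendsto (fun c => ψ c + z * (y - c)) (nhdsWithin x (Ioo x y))
        (nhds (ψ x + z * (y - x))) := by
      apply Filter.Tendsto.mono_left _ nhdsWithin_le_nhds
      exact (hcont.tendsto x).add ((continuous_const.mul
        (continuous_const.sub continuous_id)).tendsto x)
    have hne : (nhdsWithin x (Ioo x y)).NeBot := by
      apply mem_closure_iff_nhdsWithin_neBot.mp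
      rw [closure_Ioo (ne_of_lt hy)]
      exact ⟨le_refl x, le_of_lt hy⟩
    have := le_of_tendsto hlim (Filter.eventually_of_mem self_mem_nhdsWithin hev)
    linarith
end

section
/- Under the stated hypotheses on the mollifier φ, the Yamada–Watanabe function V(x) = ∫₀^x ∫₀^y φ(z) dz dy satisfies |x| − ε ≤ V(x) ≤ |x| for every x ∈ ℝ. -/
open intervalIntegral

/-- The Yamada–Watanabe function `V(x) = ∫₀ˣ ∫₀ʸ φ(z) dz dy` satisfies
`|x| - ε ≤ V(x) ≤ |x|`. -/
theorem yamadaWatanabe_abs_bounds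
    (ε δ : ℝ) (hε : ε ∈ Set.Ioo (0 : ℝ) 1) (hδ : 1 < δ)
    (φ : ℝ → ℝ) (hφ_cont : Continuous φ) (hφ_even : ∀ z : ℝ, φ (-z) = φ z)
    (hφ_nonneg : ∀ z : ℝ, 0 ≤ φ z)
    (hφ_supp : ∀ z : ℝ, (|z| < ε / δ ∨ ε < |z|) → φ z = 0)
    (hφ_bound : ∀ z : ℝ, z ≠ 0 → φ z ≤ 2 / (|z| * Real.log δ))
    (hφ_int : (∫ z in (ε / δ)..ε, φ z) = 1) :
    ∀ x : ℝ,
      |x| - ε ≤ (∫ y in (0 : ℝ)..x, ∫ z in (0 : ℝ)..y, φ z) ∧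
      (∫ y in (0 : ℝ)..x, ∫ z in (0 : ℝ)..y, φ z) ≤ |x| := by
  obtain ⟨hε0, hε1⟩ := hε
  have hδ0 : (0:ℝ) < δ := lt_trans one_pos hδ
  have hεδ0 : 0 < ε / δ := div_pos hε0 hδ0
  have hεδε : ε / δ < ε := by
    rw [div_lt_iff₀ hδ0]
    nlinarith
  set g : ℝ → ℝ := fun y => ∫ z in (0:ℝ)..y, φ z with hgdef
  have hint : ∀ a b : ℝ, IntervalIntegrable φ MeasureTheory.volume a b :=
    fun a b => hφ_cont.intervalIntegrable a b
  have hgc : Continuous g := intervalIntegral.continuous_primitive hint 0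
  have hgint : ∀ a b : ℝ, IntervalIntegrable g MeasureTheory.volume a b :=
    fun a b => hgc.intervalIntegrable a b
  have hgmono : Monotone g := by
    intro a b hab
    have : g b = g a + ∫ z in a..b, φ z := by
      rw [hgdef]
      simp [intervalIntegral.integral_add_adjacent_intervals (hint 0 a) (hint a b)]
    rw [this]
    have : 0 ≤ ∫ z in a..b, φ z :=
      intervalIntegral.integral_nonneg hab (fun z _ => hφ_nonneg z)
    linarith
  have hg0 : g 0 = 0 := intervalIntegral.integral_same
  -- φ vanishes a.e. on (0, ε/δ)
  have hlow : (∫ z in (0:ℝ)..(ε/δ), φ z) = 0 := by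
    rw [intervalIntegral.integral_of_le hεδ0.le, MeasureTheory.integral_Ioc_eq_integral_Ioo]
    apply MeasureTheory.integral_eq_zero_of_ae
    filter_upwards [MeasureTheory.ae_restrict_mem measurableSet_Ioo] with z hz
    exact hφ_supp z (Or.inl (by rw [abs_of_pos hz.1]; exact hz.2))
  have hhigh : ∀ y : ℝ, ε ≤ y → (∫ z in ε..y, φ z) = 0 := by
    intro y hy
    rw [intervalIntegral.integral_of_le hy, MeasureTheory.integral_Ioc_eq_integral_Ioo]
    apply MeasureTheory.integral_eq_zero_of_ae
    filter_upwards [MeasureTheory.ae_restrict_mem measurableSet_Ioo] with z hz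
    exact hφ_supp z (Or.inr (by rw [abs_of_pos (hε0.trans hz.1)]; exact hz.1))
  have hgε : g ε = 1 := by
    rw [hgdef]
    have := intervalIntegral.integral_add_adjacent_intervals (hint 0 (ε/δ)) (hint (ε/δ) ε)
    simp only at this ⊢
    rw [← this, hlow, hφ_int]; ring
  have hg1 : ∀ y : ℝ, ε ≤ y → g y = 1 := by
    intro y hy
    have := intervalIntegral.integral_add_adjacent_intervals (hint 0 ε) (hint ε y)
    show (∫ z in (0:ℝ)..y, φ z) = 1
    rw [← this, hhigh y hy]
    have : (∫ z in (0:ℝ)..ε, φ z) = 1 := hgε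
    linarith
  have hgle1 : ∀ y : ℝ, g y ≤ 1 := by
    intro y
    rcases le_total y ε with h | h
    · calc g y ≤ g ε := hgmono h
        _ = 1 := hgε
    · exact (hg1 y h).le
  have hgnn : ∀ y : ℝ, 0 ≤ y → 0 ≤ g y := by
    intro y hy
    calc (0:ℝ) = g 0 := hg0.symm
      _ ≤ g y := hgmono hy
  have godd : ∀ y : ℝ, g (-y) = - g y := by
    intro y
    have h1 : (∫ z in (0:ℝ)..y, φ (-z)) = ∫ z in (-y)..(0:ℝ), φ z := by
      simpa using intervalIntegral.integral_comp_neg (a := 0) (b := y) (f := φ)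
    have h2 : (∫ z in (0:ℝ)..y, φ (-z)) = ∫ z in (0:ℝ)..y, φ z := by
      simp [hφ_even]
    show (∫ z in (0:ℝ)..(-y), φ z) = - ∫ z in (0:ℝ)..y, φ z
    rw [← h2, h1, intervalIntegral.integral_symm]
  -- main bound for x ≥ 0
  have main : ∀ x : ℝ, 0 ≤ x →
      x - ε ≤ (∫ y in (0:ℝ)..x, g y) ∧ (∫ y in (0:ℝ)..x, g y) ≤ x := by
    intro x hx
    constructor
    · rcases le_total x ε with h | h
      · have : 0 ≤ ∫ y in (0:ℝ)..x, g y :=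
          intervalIntegral.integral_nonneg hx (fun y hy => hgnn y hy.1)
        linarith
      · have hsplit := intervalIntegral.integral_add_adjacent_intervals
          (hgint 0 ε) (hgint ε x)
        have h1 : 0 ≤ ∫ y in (0:ℝ)..ε, g y :=
          intervalIntegral.integral_nonneg hε0.le (fun y hy => hgnn y hy.1)
        have h2 : x - ε ≤ ∫ y in ε..x, g y := by
          have : (∫ y in ε..x, (1:ℝ)) ≤ ∫ y in ε..x, g y := by
            apply intervalIntegral.integral_mono_on h
              (intervalIntegrable_const) (hgint ε x)
            intro y hy
            exact (hg1 y hy.1).ge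
          simpa using this
        linarith [hsplit]
    · have : (∫ y in (0:ℝ)..x, g y) ≤ ∫ y in (0:ℝ)..x, (1:ℝ) := by
        apply intervalIntegral.integral_mono_on hx (hgint 0 x) intervalIntegrable_const
        intro y _; exact hgle1 y
      simpa using this
  have Veven : ∀ x : ℝ, (∫ y in (0:ℝ)..(-x), g y) = ∫ y in (0:ℝ)..x, g y := by
    intro x
    have h1 : (∫ y in (0:ℝ)..x, g (-y)) = ∫ y in (-x)..(0:ℝ), g y := by
      simpa using intervalIntegral.integral_comp_neg (a := 0) (b := x) (f := g)
    have h2 : (∫ y in (0:ℝ)..x, g (-y)) = - ∫ y in (0:ℝ)..x, g y := by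
      simp [godd]
    rw [intervalIntegral.integral_symm, ← h1, h2, neg_neg]
  intro x
  rcases le_total 0 x with hx | hx
  · have := main x hx
    rw [abs_of_nonneg hx]
    exact this
  · have := main (-x) (by linarith)
    rw [abs_of_nonpos hx]
    have hV : (∫ y in (0:ℝ)..x, g y) = ∫ y in (0:ℝ)..(-x), g y := (Veven x).symm
    constructor
    · rw [hV]; exact this.1
    · rw [hV]; exact this.2
end

section
/- (Osgood's lemma, positive constant case.) Suppose c > 0 and f(t) ≤ c + ∫_{t₀}^t γ(s)·g(f(s)) ds for almost every t ∈ [t₀, T]. Then for almost every t ∈ [t₀, T]: ∫_{(c, f(t)]} (1/g(r)) dr ≤ ∫_{t₀}^t γ(s) ds, where the left-hand integral is over the interval (c, f(t)] (and equals 0 when f(t) ≤ c); equivalently, −M(f(t)) + M(c) ≤ ∫_{t₀}^t γ(s) ds with M(x) = ∫_x^a dr/g(r). -/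
/-! With `F t = c + ∫_{t₀}^t γ g(f)` and `Φ x = ∫_{(c, x]} dr / g r`, the hypothesis says
`f ≤ F` a.e., so `F' = γ g(f) ≤ γ g(F)` and formally `(Φ ∘ F)' = F' / g(F) ≤ γ`. As `F` is only
absolutely continuous, the chain rule is replaced by a continuous induction on `[t₀, t]`: just to
the right of each point `x`, monotonicity of `g` and continuity of `g ∘ F` give
`Φ(F y) - Φ(F x) ≤ (F y - F x) / g(F x) ≤ (1 + ε) ∫_x^y γ`, and then `ε → 0`.
Since `F` may leave `[0, a]`, `g` is first extended to a continuous monotone function on `ℝ`. -/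

open MeasureTheory intervalIntegral Set Filter Topology

theorem exists_continuous_monotone_extension_Icc {g : ℝ → ℝ} {a b : ℝ} (hab : a ≤ b)
    (hg_cont : ContinuousOn g (Icc a b)) (hg_mono : MonotoneOn g (Icc a b)) :
    ∃ g' : ℝ → ℝ, Continuous g' ∧ Monotone g' ∧ EqOn g' g (Icc a b) := by
  refine ⟨fun r => g (projIcc a b hab r), ?_, ?_, ?_⟩
  · exact hg_cont.comp_continuous (continuous_subtype_val.comp continuous_projIcc)
      fun r => (projIcc a b hab r).2
  · exact fun r s hrs => hg_mono (projIcc a b hab r).2 (projIcc a b hab s).2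
      (monotone_projIcc hab hrs)
  · intro r hr
    simp only [projIcc_of_mem hab hr]

theorem MeasureTheory.IntegrableOn.mul_comp_of_mapsTo {α : Type*} [MeasurableSpace α]
    {μ : Measure α} {γ f : α → ℝ} {h : ℝ → ℝ} {s : Set α} {K : Set ℝ} (hγ : IntegrableOn γ s μ)
    (hs : MeasurableSet s) (hK : IsCompact K) (hh : Continuous h) (hf : Measurable f)
    (hfK : MapsTo f s K) : IntegrableOn (fun x => γ x * h (f x)) s μ := by
  obtain ⟨C, hC⟩ := hK.exists_bound_of_continuousOn hh.continuousOn
  refine hγ.mul_bdd (c := C) (hh.measurable.comp hf).aestronglyMeasurable ?_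
  filter_upwards [ae_restrict_mem hs] with x hx
  exact hC _ (hfK hx)

theorem Filter.Eventually.forall_Ioc_nhdsGT {α : Type*} [TopologicalSpace α] [LinearOrder α]
    [OrderTopology α] [NoMaxOrder α] [DenselyOrdered α] {P : α → Prop} {x : α}
    (h : ∀ᶠ s in 𝓝[>] x, P s) : ∀ᶠ y in 𝓝[>] x, ∀ s ∈ Ioc x y, P s := by
  obtain ⟨z, hxz, hz⟩ := mem_nhdsGT_iff_exists_Ioc_subset.1 h
  filter_upwards [Ioc_mem_nhdsGT hxz] with y hy s hs
  exact hz ⟨hs.1, hs.2.trans hy.2⟩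

theorem sub_le_sub_of_forall_eventually_nhdsGT {H G : ℝ → ℝ} {a b : ℝ} (hab : a ≤ b)
    (hH : ContinuousOn H (Icc a b)) (hG : ContinuousOn G (Icc a b))
    (hloc : ∀ x ∈ Ico a b, ∀ ε > 0, ∀ᶠ y in 𝓝[>] x, H y - H x ≤ (1 + ε) * (G y - G x)) :
    H b - H a ≤ G b - G a := by
  have hε : ∀ ε > 0, H b - H a ≤ (1 + ε) * (G b - G a) := by
    intro ε hε
    set S := {t | H t - H a ≤ (1 + ε) * (G t - G a)}
    have hclosed : IsClosed (S ∩ Icc a b) := by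
      rw [inter_comm]
      exact isClosed_Icc.isClosed_le (hH.sub continuousOn_const)
        (continuousOn_const.mul (hG.sub continuousOn_const))
    refine hclosed.Icc_subset_of_forall_mem_nhdsWithin (by simp [S]) ?_ (right_mem_Icc.2 hab)
    rintro x ⟨hxS, hx⟩
    replace hxS : H x - H a ≤ (1 + ε) * (G x - G a) := hxS
    filter_upwards [hloc x hx ε hε] with y hy
    show H y - H a ≤ (1 + ε) * (G y - G a)
    linear_combination hy + hxS
  have hlim : Tendsto (fun ε : ℝ => (1 + ε) * (G b - G a)) (𝓝[>] 0) (𝓝 (G b - G a)) := by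
    refine tendsto_nhdsWithin_of_tendsto_nhds ?_
    exact ((continuous_const.add continuous_id).mul continuous_const).tendsto' 0 _ (by simp)
  exact ge_of_tendsto hlim (eventually_nhdsWithin_of_forall hε)

section Primitive

variable {f : ℝ → ℝ} {a b : ℝ}

theorem integral_sub_integral_of_mem_Icc (hf : IntegrableOn f (Icc a b)) {x y : ℝ}
    (hx : x ∈ Icc a b) (hy : y ∈ Icc a b) :
    (∫ s in a..y, f s) - ∫ s in a..x, f s = ∫ s in x..y, f s :=
  have ha : a ∈ Icc a b := left_mem_Icc.2 (hx.1.trans hx.2)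
  integral_interval_sub_left (hf.mono_set (uIcc_subset_Icc ha hy)).intervalIntegrable
    (hf.mono_set (uIcc_subset_Icc ha hx)).intervalIntegrable

theorem continuousOn_primitive_Icc_of_integrableOn (hab : a ≤ b) (hf : IntegrableOn f (Icc a b)) :
    ContinuousOn (fun x => ∫ s in a..x, f s) (Icc a b) := by
  rw [← uIcc_of_le hab] at hf ⊢
  exact continuousOn_primitive_interval hf

theorem monotoneOn_primitive_of_nonneg (hf : IntegrableOn f (Icc a b))
    (hf_nonneg : ∀ s ∈ Icc a b, 0 ≤ f s) : MonotoneOn (fun x => ∫ s in a..x, f s) (Icc a b) :=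
  fun x hx y hy hxy => by
    have := integral_nonneg (μ := volume) hxy fun s hs =>
      hf_nonneg s ⟨hx.1.trans hs.1, hs.2.trans hy.2⟩
    linarith [integral_sub_integral_of_mem_Icc hf hx hy]

end Primitive

section InvIntegral

variable {g : ℝ → ℝ} {c : ℝ}

theorem continuousOn_inv_Ici (hg_cont : Continuous g) (hg_mono : Monotone g) (hgc : 0 < g c) :
    ContinuousOn (fun r => (g r)⁻¹) (Ici c) :=
  hg_cont.continuousOn.inv₀ fun _ hr => (hgc.trans_le (hg_mono hr)).ne'

theorem monotone_integral_Ioc_inv (hg_cont : Continuous g) (hg_mono : Monotone g)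
    (hgc : 0 < g c) : Monotone fun x => ∫ r in Ioc c x, (g r)⁻¹ := by
  intro x y hxy
  refine setIntegral_mono_set ?_ ?_ (Ioc_subset_Ioc_right hxy).eventuallyLE
  · exact ((continuousOn_inv_Ici hg_cont hg_mono hgc).mono Icc_subset_Ici_self).integrableOn_Icc
      |>.mono_set Ioc_subset_Icc_self
  · filter_upwards [ae_restrict_mem measurableSet_Ioc] with r hr
    exact inv_nonneg.2 (hgc.trans_le (hg_mono hr.1.le)).le

theorem continuousOn_integral_Ioc_inv (hg_cont : Continuous g) (hg_mono : Monotone g)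
    (hgc : 0 < g c) (b : ℝ) : ContinuousOn (fun x => ∫ r in Ioc c x, (g r)⁻¹) (Icc c b) :=
  continuousOn_primitive
    ((continuousOn_inv_Ici hg_cont hg_mono hgc).mono Icc_subset_Ici_self).integrableOn_Icc

theorem integral_Ioc_inv_sub_le (hg_cont : Continuous g) (hg_mono : Monotone g)
    (hgc : 0 < g c) {x y : ℝ} (hcx : c ≤ x) (hxy : x ≤ y) :
    (∫ r in Ioc c y, (g r)⁻¹) - ∫ r in Ioc c x, (g r)⁻¹ ≤ (y - x) / g x := by
  have hint : ∀ z, c ≤ z → IntervalIntegrable (fun r => (g r)⁻¹) volume c z := fun z hz =>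
    ((continuousOn_inv_Ici hg_cont hg_mono hgc).mono
      (by simp [uIcc_of_le hz, Icc_subset_Ici_self])).intervalIntegrable
  rw [← integral_of_le (hcx.trans hxy), ← integral_of_le hcx,
    integral_interval_sub_left (hint y (hcx.trans hxy)) (hint x hcx)]
  calc ∫ r in x..y, (g r)⁻¹ ≤ ∫ _ in x..y, (g x)⁻¹ := by
        refine integral_mono_on hxy ((hint x hcx).symm.trans (hint y (hcx.trans hxy))) (by simp)
          fun r hr => inv_anti₀ (hgc.trans_le (hg_mono hcx)) (hg_mono hr.1)
    _ = (y - x) / g x := by simp [div_eq_mul_inv]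

end InvIntegral

theorem eventually_integral_le_mul_integral {u γ h : ℝ → ℝ} {x b K : ℝ} (hxb : x < b)
    (hu_int : IntegrableOn u (Ioc x b)) (hγ_int : IntegrableOn γ (Ioc x b))
    (hγ_nonneg : ∀ s ∈ Ioc x b, 0 ≤ γ s)
    (hu_le : ∀ᵐ s ∂volume.restrict (Ioc x b), u s ≤ γ s * h s)
    (hh : ContinuousWithinAt h (Ioi x) x) (hK : h x < K) :
    ∀ᶠ y in 𝓝[>] x, ∫ s in x..y, u s ≤ K * ∫ s in x..y, γ s := by
  have hnear : ∀ᶠ y in 𝓝[>] x, ∀ s ∈ Ioc x y, s ∈ Ioc x b ∧ h s < K :=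
    Eventually.forall_Ioc_nhdsGT
      (Eventually.and (Ioc_mem_nhdsGT hxb) (hh.eventually_lt_const hK))
  filter_upwards [hnear, self_mem_nhdsWithin] with y hy hxy
  have hsub : Ioc x y ⊆ Ioc x b := fun s hs => (hy s hs).1
  rw [integral_of_le hxy.le, integral_of_le hxy.le, ← MeasureTheory.integral_const_mul]
  refine setIntegral_mono_ae_restrict (hu_int.mono_set hsub) ((hγ_int.mono_set hsub).const_mul K) ?_
  filter_upwards [ae_restrict_of_ae_restrict_of_subset hsub hu_le,
    ae_restrict_mem measurableSet_Ioc] with s hus hs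
  calc u s ≤ γ s * h s := hus
    _ ≤ γ s * K := mul_le_mul_of_nonneg_left (hy s hs).2.le (hγ_nonneg s (hsub hs))
    _ = K * γ s := mul_comm _ _

theorem integral_Ioc_inv_primitive_le_integral {g γ u : ℝ → ℝ} {c t₀ T : ℝ}
    (hg_cont : Continuous g) (hg_mono : Monotone g) (hgc : 0 < g c)
    (hγ_int : IntegrableOn γ (Icc t₀ T)) (hγ_nonneg : ∀ s ∈ Icc t₀ T, 0 ≤ γ s)
    (hu_int : IntegrableOn u (Icc t₀ T)) (hu_nonneg : ∀ s ∈ Icc t₀ T, 0 ≤ u s)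
    (hu_le : ∀ᵐ s ∂volume.restrict (Icc t₀ T), u s ≤ γ s * g (c + ∫ τ in t₀..s, u τ))
    {t : ℝ} (ht : t ∈ Icc t₀ T) :
    ∫ r in Ioc c (c + ∫ s in t₀..t, u s), (g r)⁻¹ ≤ ∫ s in t₀..t, γ s := by
  set F := fun s => c + ∫ τ in t₀..s, u τ with hF
  set Φ := fun x => ∫ r in Ioc c x, (g r)⁻¹ with hΦ
  have hT : t₀ ≤ T := ht.1.trans ht.2
  have hF_mono : MonotoneOn F (Icc t₀ T) := fun x hx y hy hxy =>
    add_le_add_right (monotoneOn_primitive_of_nonneg hu_int hu_nonneg hx hy hxy) c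
  have hF_ge : ∀ s ∈ Icc t₀ T, c ≤ F s := fun s hs => by
    simpa [hF] using hF_mono (left_mem_Icc.2 hT) hs hs.1
  have hF_cont : ContinuousOn F (Icc t₀ T) :=
    continuousOn_const.add (continuousOn_primitive_Icc_of_integrableOn hT hu_int)
  have hΦF_cont : ContinuousOn (fun s => Φ (F s)) (Icc t₀ T) :=
    (continuousOn_integral_Ioc_inv hg_cont hg_mono hgc (F T)).comp hF_cont
      fun s hs => ⟨hF_ge s hs, hF_mono hs (right_mem_Icc.2 hT) hs.2⟩
  have hIcc : Icc t₀ t ⊆ Icc t₀ T := Icc_subset_Icc_right ht.2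
  suffices Φ (F t) - Φ (F t₀) ≤ (∫ s in t₀..t, γ s) - ∫ s in t₀..t₀, γ s by simpa [hF, hΦ]
  refine sub_le_sub_of_forall_eventually_nhdsGT ht.1 (hΦF_cont.mono hIcc)
    ((continuousOn_primitive_Icc_of_integrableOn hT hγ_int).mono hIcc) ?_
  rintro x ⟨hx₀, hxt⟩ ε hε
  have hx : x ∈ Icc t₀ T := ⟨hx₀, hxt.le.trans ht.2⟩
  have hxT : x < T := hxt.trans_le ht.2
  have hIoc : Ioc x T ⊆ Icc t₀ T := fun s hs => ⟨hx₀.trans hs.1.le, hs.2⟩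
  have hgFx : 0 < g (F x) := hgc.trans_le (hg_mono (hF_ge x hx))
  have hgF_cont : ContinuousWithinAt (fun s => g (F s)) (Ioi x) x :=
    (hg_cont.comp_continuousOn hF_cont x hx).mono_of_mem_nhdsWithin
      (mem_of_superset (Ioc_mem_nhdsGT hxT) hIoc)
  filter_upwards [eventually_integral_le_mul_integral hxT (hu_int.mono_set hIoc)
      (hγ_int.mono_set hIoc) (fun s hs => hγ_nonneg s (hIoc hs))
      (ae_restrict_of_ae_restrict_of_subset hIoc hu_le) hgF_cont
      (lt_mul_of_one_lt_left hgFx (lt_add_of_pos_right 1 hε)),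
    Ioc_mem_nhdsGT hxT] with y hincr hy
  have hy' : y ∈ Icc t₀ T := hIoc hy
  calc Φ (F y) - Φ (F x) ≤ (F y - F x) / g (F x) :=
        integral_Ioc_inv_sub_le hg_cont hg_mono hgc (hF_ge x hx) (hF_mono hx hy' hy.1.le)
    _ ≤ (1 + ε) * g (F x) * (∫ s in x..y, γ s) / g (F x) := by
        simp only [hF, add_sub_add_left_eq_sub, integral_sub_integral_of_mem_Icc hu_int hx hy']
        exact div_le_div_of_nonneg_right hincr hgFx.le
    _ = (1 + ε) * ((∫ s in t₀..y, γ s) - ∫ s in t₀..x, γ s) := by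
        rw [integral_sub_integral_of_mem_Icc hγ_int hx hy']
        field_simp

theorem osgood_lemma_pos_general
    (t₀ T a c : ℝ) (ha : 0 < a) (hc : 0 < c)
    (f γ g : ℝ → ℝ)
    (hf_meas : Measurable f) (hf_mem : ∀ t ∈ Set.Icc t₀ T, f t ∈ Set.Icc 0 a)
    (hγ_int : IntegrableOn γ (Set.Icc t₀ T)) (hγ_nonneg : ∀ s ∈ Set.Icc t₀ T, 0 ≤ γ s)
    (hg_cont : ContinuousOn g (Set.Icc 0 a)) (hg_mono : MonotoneOn g (Set.Icc 0 a))
    (hg_nonneg : ∀ r ∈ Set.Icc 0 a, 0 ≤ g r) (hg_pos : ∀ r ∈ Set.Ioc 0 a, 0 < g r)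
    (h_ineq : ∀ᵐ t ∂(volume.restrict (Set.Icc t₀ T)),
        f t ≤ c + ∫ s in t₀..t, γ s * g (f s)) :
    ∀ᵐ t ∂(volume.restrict (Set.Icc t₀ T)),
      (∫ r in Set.Ioc c (f t), (g r)⁻¹) ≤ ∫ s in t₀..t, γ s := by
  obtain ⟨g', hg'_cont, hg'_mono, hg'_eq⟩ :=
    exists_continuous_monotone_extension_Icc ha.le hg_cont hg_mono
  have hca : min c a ∈ Icc 0 a := ⟨(lt_min hc ha).le, min_le_right c a⟩
  have hg'c : 0 < g' c := (hg_pos _ ⟨lt_min hc ha, hca.2⟩).trans_le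
    (hg'_eq hca ▸ hg'_mono (min_le_left c a))
  set u := fun s => γ s * g' (f s) with hu
  have hu_eq : EqOn u (fun s => γ s * g (f s)) (Icc t₀ T) := fun s hs => by
    simp only [hu, hg'_eq (hf_mem s hs)]
  have hu_int : IntegrableOn u (Icc t₀ T) :=
    hγ_int.mul_comp_of_mapsTo measurableSet_Icc isCompact_Icc hg'_cont hf_meas hf_mem
  have hfF : ∀ᵐ t ∂(volume.restrict (Icc t₀ T)), f t ≤ c + ∫ s in t₀..t, u s := by
    filter_upwards [h_ineq, ae_restrict_mem measurableSet_Icc] with t ht htI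
    have hsub : uIcc t₀ t ⊆ Icc t₀ T := uIcc_subset_Icc (left_mem_Icc.2 (htI.1.trans htI.2)) htI
    rwa [integral_congr (hu_eq.mono hsub).symm] at ht
  have hu_le :
      ∀ᵐ s ∂(volume.restrict (Icc t₀ T)), u s ≤ γ s * g' (c + ∫ τ in t₀..s, u τ) := by
    filter_upwards [hfF, ae_restrict_mem measurableSet_Icc] with s hs hsI
    exact mul_le_mul_of_nonneg_left (hg'_mono hs) (hγ_nonneg s hsI)
  filter_upwards [hfF, ae_restrict_mem measurableSet_Icc] with t hft ht
  calc (∫ r in Ioc c (f t), (g r)⁻¹) = ∫ r in Ioc c (f t), (g' r)⁻¹ :=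
        setIntegral_congr_fun measurableSet_Ioc fun r hr => by
          rw [hg'_eq ⟨(hc.trans hr.1).le, hr.2.trans (hf_mem t ht).2⟩]
    _ ≤ ∫ r in Ioc c (c + ∫ s in t₀..t, u s), (g' r)⁻¹ :=
        monotone_integral_Ioc_inv hg'_cont hg'_mono hg'c hft
    _ ≤ ∫ s in t₀..t, γ s :=
        integral_Ioc_inv_primitive_le_integral hg'_cont hg'_mono hg'c hγ_int hγ_nonneg hu_int
          (fun s hs => hu_eq hs ▸ mul_nonneg (hγ_nonneg s hs) (hg_nonneg _ (hf_mem s hs))) hu_le ht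

/-- Osgood's lemma, positive constant case: if `f(t) ≤ c + ∫_{t₀}^t γ(s) g(f(s)) ds`
for a.e. `t ∈ [t₀, T]` with `c > 0`, then
`∫_{(c, f(t)]} dr / g(r) ≤ ∫_{t₀}^t γ(s) ds` for a.e. `t ∈ [t₀, T]`. -/
theorem osgood_lemma_pos
    (t₀ T a c : ℝ) (ht₀ : 0 ≤ t₀) (htT : t₀ < T) (ha : 0 < a) (hc : 0 < c)
    (f γ g : ℝ → ℝ)
    (hf_meas : Measurable f) (hf_mem : ∀ t ∈ Set.Icc t₀ T, f t ∈ Set.Icc 0 a)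
    (hγ_int : IntegrableOn γ (Set.Icc t₀ T)) (hγ_nonneg : ∀ s ∈ Set.Icc t₀ T, 0 ≤ γ s)
    (hg_cont : ContinuousOn g (Set.Icc 0 a)) (hg_mono : MonotoneOn g (Set.Icc 0 a))
    (hg_nonneg : ∀ r ∈ Set.Icc 0 a, 0 ≤ g r) (hg_pos : ∀ r ∈ Set.Ioc 0 a, 0 < g r)
    (h_ineq : ∀ᵐ t ∂(volume.restrict (Set.Icc t₀ T)),
        f t ≤ c + ∫ s in t₀..t, γ s * g (f s)) :
    ∀ᵐ t ∂(volume.restrict (Set.Icc t₀ T)),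
      (∫ r in Set.Ioc c (f t), (g r)⁻¹) ≤ ∫ s in t₀..t, γ s :=
  osgood_lemma_pos_general t₀ T a c ha hc f γ g hf_meas hf_mem hγ_int hγ_nonneg hg_cont hg_mono
    hg_nonneg hg_pos h_ineq
end

section
/- (Osgood's lemma, zero constant case.) Suppose f(t) ≤ ∫_{t₀}^t γ(s)·g(f(s)) ds for almost every t ∈ [t₀, T], and suppose the Lebesgue integral ∫_{(0, a]} (1/g(r)) dr diverges to +∞. Then f(t) = 0 for almost every t ∈ [t₀, T]. -/
/-! Put `F t = ∫_{t₀}^t γ g(f)`. Then `f ≤ F` a.e., and `F` is absolutely continuous and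
nondecreasing with `F t₀ = 0` and `F' = γ g(f) ≤ γ g(F)` a.e. If `F` were positive somewhere,
then for every `y ∈ (0, F T]`, say `y = F t`, the fundamental theorem of calculus for the
absolutely continuous function `Φ ∘ F`, where `Φ' = 1 / g`, gives
`∫_y^{F T} dr / g(r) ≤ ∫_t^T γ`. This bound is uniform in `y`, so `1 / g` would be integrable
near `0`, against the Osgood condition. Hence `F = 0`, and `0 ≤ f ≤ F` forces `f = 0` a.e. -/

open MeasureTheory intervalIntegral Set Filter Topology

theorem LipschitzOnWith.comp_absolutelyContinuousOnInterval {X Y : Type*} [PseudoMetricSpace X]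
    [PseudoMetricSpace Y] {Φ : X → Y} {F : ℝ → X} {K : NNReal} {s : Set X} {a b : ℝ}
    (hΦ : LipschitzOnWith K Φ s) (hF : AbsolutelyContinuousOnInterval F a b)
    (hmaps : MapsTo F (uIcc a b) s) : AbsolutelyContinuousOnInterval (Φ ∘ F) a b := by
  unfold AbsolutelyContinuousOnInterval at hF ⊢
  refine squeeze_zero' (Eventually.of_forall fun _ ↦ Finset.sum_nonneg fun _ _ ↦ dist_nonneg) ?_
    (by simpa using hF.const_mul (K : ℝ))
  filter_upwards [mem_inf_of_right (mem_principal_self _)] with E hE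
  rw [Finset.mul_sum]
  exact Finset.sum_le_sum fun i hi ↦
    hΦ.dist_le_mul _ (hmaps (hE.1 i hi).1) _ (hmaps (hE.1 i hi).2)

theorem AbsolutelyContinuousOnInterval.integral_inv_le_of_ae_deriv_le_mul
    {F G γ : ℝ → ℝ} {t s : ℝ} (hts : t ≤ s) (hF : AbsolutelyContinuousOnInterval F t s)
    (hF_mono : MonotoneOn F (Icc t s)) (hG : Continuous G)
    (hG_pos : ∀ y ∈ Icc (F t) (F s), 0 < G y) (hγ : IntervalIntegrable γ volume t s)
    (hderiv : ∀ᵐ x, x ∈ Icc t s → deriv F x ≤ G (F x) * γ x) :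
    ∫ y in F t..F s, (G y)⁻¹ ≤ ∫ x in t..s, γ x := by
  set Φ : ℝ → ℝ := fun y ↦ ∫ r in F t..y, (G r)⁻¹
  have hinv : ContinuousOn (fun y ↦ (G y)⁻¹) (Icc (F t) (F s)) :=
    hG.continuousOn.inv₀ fun y hy ↦ (hG_pos y hy).ne'
  have hΦ_deriv : ∀ y ∈ Icc (F t) (F s), HasDerivAt Φ (G y)⁻¹ y := fun y hy ↦
    integral_hasDerivAt_right (hinv.mono (uIcc_subset_Icc (left_mem_Icc.2 (hy.1.trans hy.2)) hy)
      |>.intervalIntegrable) hG.measurable.inv.stronglyMeasurable.stronglyMeasurableAtFilter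
      (hG.continuousAt.inv₀ (hG_pos y hy).ne')
  obtain ⟨C, hC⟩ := isCompact_Icc.exists_bound_of_continuousOn hinv
  have hΦ_lip : LipschitzOnWith C.toNNReal Φ (Icc (F t) (F s)) :=
    (convex_Icc _ _).lipschitzOnWith_of_nnnorm_hasDerivWithin_le
      (fun y hy ↦ (hΦ_deriv y hy).hasDerivWithinAt) fun y hy ↦ by
        rw [← NNReal.coe_le_coe, coe_nnnorm]; exact (hC y hy).trans (le_max_left _ _)
  have hmaps : MapsTo F (uIcc t s) (Icc (F t) (F s)) := by
    rw [uIcc_of_le hts]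
    exact fun x hx ↦ ⟨hF_mono ⟨le_rfl, hts⟩ hx hx.1, hF_mono hx ⟨hts, le_rfl⟩ hx.2⟩
  have hΦF := hΦ_lip.comp_absolutelyContinuousOnInterval hF hmaps
  calc ∫ y in F t..F s, (G y)⁻¹ = ∫ x in t..s, deriv (Φ ∘ F) x := by
        rw [hΦF.integral_deriv_eq_sub]; simp [Φ]
    _ ≤ ∫ x in t..s, γ x := by
        refine integral_mono_ae_restrict hts hΦF.intervalIntegrable_deriv hγ ?_
        rw [EventuallyLE, ae_restrict_iff' measurableSet_Icc]
        filter_upwards [hderiv, hF.ae_differentiableAt] with x hx_deriv hx_diff hx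
        have hFx := hmaps (uIcc_of_le hts ▸ hx)
        have hGx := hG_pos _ hFx
        rw [((hΦ_deriv _ hFx).comp x (hx_diff (uIcc_of_le hts ▸ hx)).hasDerivAt).deriv]
        calc (G (F x))⁻¹ * deriv F x ≤ (G (F x))⁻¹ * (G (F x) * γ x) := by
              gcongr; exact hx_deriv hx
          _ = γ x := by field_simp

theorem integrableOn_Ioc_of_integrableOn_Ioc_of_continuousOn {E : Type*} [NormedAddCommGroup E]
    {h : ℝ → E} {c ε b : ℝ} (hh : ContinuousOn h (Ioi c)) (hε : c < ε)
    (hint : IntegrableOn h (Ioc c ε)) : IntegrableOn h (Ioc c b) :=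
  (hint.union ((hh.mono fun _ hy ↦ hε.trans_le hy.1).integrableOn_Icc)).mono_set fun y hy ↦
    (le_or_gt y ε).imp (fun h ↦ ⟨hy.1, h⟩) fun h ↦ ⟨h.le, hy.2⟩

theorem AbsolutelyContinuousOnInterval.eqOn_zero_of_osgood {F G γ : ℝ → ℝ} {t₀ T ε : ℝ}
    (htT : t₀ ≤ T) (hF : AbsolutelyContinuousOnInterval F t₀ T)
    (hF_mono : MonotoneOn F (Icc t₀ T)) (hF₀ : F t₀ = 0)
    (hG : Continuous G) (hG_pos : ∀ y, 0 < y → 0 < G y)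
    (hG_div : ¬ IntegrableOn (fun y ↦ (G y)⁻¹) (Ioc 0 ε))
    (hγ : IntervalIntegrable γ volume t₀ T)
    (hderiv : ∀ᵐ x, x ∈ Icc t₀ T → deriv F x ≤ G (F x) * γ x) :
    EqOn F 0 (Icc t₀ T) := by
  intro x hx
  by_contra hFx
  have hFT : 0 < F T :=
    ((hF₀ ▸ hF_mono ⟨le_rfl, htT⟩ hx hx.1).lt_of_ne' hFx).trans_le (hF_mono hx ⟨htT, le_rfl⟩ hx.2)
  have hinv : ContinuousOn (fun y ↦ (G y)⁻¹) (Ioi 0) :=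
    hG.continuousOn.inv₀ fun y hy ↦ (hG_pos y hy).ne'
  have hbound : ∀ y ∈ Ioc 0 (F T), ∫ r in Ioc y (F T), ‖(G r)⁻¹‖ ≤ ∫ x in Ioc t₀ T, ‖γ x‖ := by
    intro y hy
    obtain ⟨t, ht, rfl⟩ : ∃ t ∈ Icc t₀ T, F t = y :=
      intermediate_value_Icc htT (uIcc_of_le htT ▸ hF.continuousOn) ⟨hF₀ ▸ hy.1.le, hy.2⟩
    have hsub : uIcc t T ⊆ uIcc t₀ T := by
      simp only [uIcc_of_le ht.2, uIcc_of_le htT]; exact Icc_subset_Icc_left ht.1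
    have hosgood := (hF.mono hsub).integral_inv_le_of_ae_deriv_le_mul ht.2
      (hF_mono.mono (Icc_subset_Icc_left ht.1)) hG (fun z hz ↦ hG_pos z (hy.1.trans_le hz.1))
      (hγ.mono_set hsub) (hderiv.mono fun x hx hxt ↦ hx (Icc_subset_Icc_left ht.1 hxt))
    calc ∫ r in Ioc (F t) (F T), ‖(G r)⁻¹‖ = ∫ r in F t..F T, (G r)⁻¹ := by
          rw [integral_of_le hy.2]
          exact setIntegral_congr_fun measurableSet_Ioc fun r hr ↦
            Real.norm_of_nonneg (inv_nonneg.2 (hG_pos r (hy.1.trans hr.1)).le)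
      _ ≤ ∫ x in t..T, γ x := hosgood
      _ ≤ ∫ x in Ioc t T, ‖γ x‖ := by
          rw [integral_of_le ht.2]; exact (le_abs_self _).trans (abs_integral_le_integral_abs)
      _ ≤ ∫ x in Ioc t₀ T, ‖γ x‖ :=
          setIntegral_mono_set hγ.1.norm (ae_of_all _ fun _ ↦ norm_nonneg _)
            (Ioc_subset_Ioc_left ht.1).eventuallyLE
  have hint : IntegrableOn (fun y ↦ (G y)⁻¹) (Ioc 0 (F T)) := by
    refine integrableOn_Ioc_of_intervalIntegral_norm_bounded_left (l := atTop)
      (a := fun n : ℕ ↦ F T / (n + 1)) (fun n ↦ ?_) ?_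
      (Eventually.of_forall fun n ↦ hbound _ ⟨?_, ?_⟩)
    · have hn : 0 < F T / (n + 1) := by positivity
      exact (hinv.mono fun y hy ↦ hn.trans_le hy.1).integrableOn_Icc.mono_set Ioc_subset_Icc_self
    · simpa [Function.comp_def] using
        (tendsto_const_div_atTop_nhds_zero_nat (F T)).comp (tendsto_add_atTop_nat 1)
    · positivity
    · exact div_le_self hFT.le (by linarith [(n.cast_nonneg : (0:ℝ) ≤ n)])
  exact hG_div (integrableOn_Ioc_of_integrableOn_Ioc_of_continuousOn hinv hFT hint)

theorem ae_eq_zero_of_le_integral_mul_comp {f γ G : ℝ → ℝ} {t₀ T ε : ℝ} (htT : t₀ ≤ T)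
    (hf_nonneg : ∀ t ∈ Icc t₀ T, 0 ≤ f t)
    (hγ : IntervalIntegrable γ volume t₀ T) (hγ_nonneg : ∀ s ∈ Icc t₀ T, 0 ≤ γ s)
    (hG : Continuous G) (hG_mono : Monotone G) (hG_nonneg : 0 ≤ G 0)
    (hG_pos : ∀ y, 0 < y → 0 < G y) (hG_div : ¬ IntegrableOn (fun y ↦ (G y)⁻¹) (Ioc 0 ε))
    (hψ : IntervalIntegrable (fun s ↦ γ s * G (f s)) volume t₀ T)
    (h_ineq : ∀ᵐ t, t ∈ Icc t₀ T → f t ≤ ∫ s in t₀..t, γ s * G (f s)) :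
    ∀ᵐ t, t ∈ Icc t₀ T → f t = 0 := by
  set F : ℝ → ℝ := fun t ↦ ∫ s in t₀..t, γ s * G (f s)
  have hψ_nonneg : ∀ s ∈ Icc t₀ T, 0 ≤ γ s * G (f s) := fun s hs ↦
    mul_nonneg (hγ_nonneg s hs) (hG_nonneg.trans (hG_mono (hf_nonneg s hs)))
  have hF_mono : MonotoneOn F (Icc t₀ T) := fun x hx y hy hxy ↦ by
    have hsub : ∀ z ∈ Icc t₀ T, uIcc t₀ z ⊆ uIcc t₀ T := fun z hz ↦
      uIcc_subset_uIcc left_mem_uIcc (uIcc_of_le htT ▸ hz)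
    rw [← sub_nonneg, integral_interval_sub_left (hψ.mono_set (hsub y hy))
      (hψ.mono_set (hsub x hx))]
    exact integral_nonneg hxy fun s hs ↦ hψ_nonneg s ⟨hx.1.trans hs.1, hs.2.trans hy.2⟩
  have hF_deriv : ∀ᵐ x, x ∈ Icc t₀ T → deriv F x ≤ G (F x) * γ x := by
    filter_upwards [hψ.ae_hasDerivAt_integral, h_ineq] with x hx_deriv hx_le hx
    rw [(hx_deriv (uIcc_of_le htT ▸ hx) t₀ left_mem_uIcc).deriv, mul_comm]
    exact mul_le_mul_of_nonneg_right (hG_mono (hx_le hx)) (hγ_nonneg x hx)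
  have hF_zero := (hψ.absolutelyContinuousOnInterval_intervalIntegral left_mem_uIcc
    ).eqOn_zero_of_osgood htT hF_mono integral_same hG hG_pos hG_div hγ hF_deriv
  filter_upwards [h_ineq] with t ht_le ht
  exact le_antisymm ((ht_le ht).trans_eq (hF_zero ht)) (hf_nonneg t ht)

theorem osgood_lemma_zero_general
    (t₀ T a : ℝ) (htT : t₀ < T) (ha : 0 < a)
    (f γ g : ℝ → ℝ)
    (hf_meas : Measurable f) (hf_mem : ∀ t ∈ Set.Icc t₀ T, f t ∈ Set.Icc 0 a)
    (hγ_int : IntegrableOn γ (Set.Icc t₀ T)) (hγ_nonneg : ∀ s ∈ Set.Icc t₀ T, 0 ≤ γ s)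
    (hg_cont : ContinuousOn g (Set.Icc 0 a)) (hg_mono : MonotoneOn g (Set.Icc 0 a))
    (hg_nonneg : ∀ r ∈ Set.Icc 0 a, 0 ≤ g r) (hg_pos : ∀ r ∈ Set.Ioc 0 a, 0 < g r)
    (hg_div : ∫⁻ r in Set.Ioc (0 : ℝ) a, ENNReal.ofReal ((g r)⁻¹) = ⊤)
    (h_ineq : ∀ᵐ t ∂(volume.restrict (Set.Icc t₀ T)),
        f t ≤ ∫ s in t₀..t, γ s * g (f s)) :
    ∀ᵐ t ∂(volume.restrict (Set.Icc t₀ T)), f t = 0 := by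
  -- Extend `g` by constants, since the majorant `F` of `f` may exceed `a`.
  set G : ℝ → ℝ := IccExtend ha.le ((Icc 0 a).domRestrict g)
  have hG_cont : Continuous G := continuous_IccExtend_iff.2 hg_cont.domRestrict
  have hG_eq : EqOn G g (Icc 0 a) := fun y hy ↦ IccExtend_of_mem ha.le _ hy
  have hψ : IntervalIntegrable (fun s ↦ γ s * G (f s)) volume t₀ T := by
    obtain ⟨C, hC⟩ :=
      isCompact_Icc.exists_bound_of_continuousOn (hG_cont.continuousOn (s := Icc 0 a))
    refine (intervalIntegrable_iff_integrableOn_Icc_of_le htT.le).2 (hγ_int.mul_bdd (c := C)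
      (hG_cont.measurable.comp hf_meas).aestronglyMeasurable ?_)
    filter_upwards [ae_restrict_mem measurableSet_Icc] with s hs using hC _ (hf_mem s hs)
  have h_ineq_G : ∀ᵐ t, t ∈ Icc t₀ T → f t ≤ ∫ s in t₀..t, γ s * G (f s) := by
    rw [← ae_restrict_iff' measurableSet_Icc]
    filter_upwards [h_ineq, ae_restrict_mem measurableSet_Icc] with t ht htmem
    refine ht.trans_eq (integral_congr fun s hs ↦ ?_)
    rw [uIcc_of_le htmem.1] at hs
    simp only [hG_eq (hf_mem s ⟨hs.1, hs.2.trans htmem.2⟩)]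
  have hG_div : ¬ IntegrableOn (fun y ↦ (G y)⁻¹) (Ioc 0 a) := fun hint ↦
    hint.lintegral_lt_top.ne (hg_div ▸ setLIntegral_congr_fun measurableSet_Ioc fun y hy ↦ by
      rw [hG_eq (Ioc_subset_Icc_self hy)])
  rw [ae_restrict_iff' measurableSet_Icc]
  exact ae_eq_zero_of_le_integral_mul_comp htT.le (fun t ht ↦ (hf_mem t ht).1)
    ((intervalIntegrable_iff_integrableOn_Icc_of_le htT.le).2 hγ_int) hγ_nonneg hG_cont
    (Monotone.IccExtend ha.le fun x y hxy ↦ hg_mono x.2 y.2 hxy)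
    (hG_eq (left_mem_Icc.2 ha.le) ▸ hg_nonneg 0 (left_mem_Icc.2 ha.le))
    (fun y hy ↦ hg_pos _ ⟨lt_max_of_lt_right (lt_min ha hy), (projIcc 0 a ha.le y).2.2⟩)
    hG_div hψ h_ineq_G

/-- Osgood's lemma, zero constant case: if `f(t) ≤ ∫_{t₀}^t γ(s) g(f(s)) ds`
for a.e. `t ∈ [t₀, T]` and `∫_{(0, a]} dr / g(r) = +∞`, then `f = 0` a.e. on
`[t₀, T]`. -/
theorem osgood_lemma_zero
    (t₀ T a : ℝ) (ht₀ : 0 ≤ t₀) (htT : t₀ < T) (ha : 0 < a)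
    (f γ g : ℝ → ℝ)
    (hf_meas : Measurable f) (hf_mem : ∀ t ∈ Set.Icc t₀ T, f t ∈ Set.Icc 0 a)
    (hγ_int : IntegrableOn γ (Set.Icc t₀ T)) (hγ_nonneg : ∀ s ∈ Set.Icc t₀ T, 0 ≤ γ s)
    (hg_cont : ContinuousOn g (Set.Icc 0 a)) (hg_mono : MonotoneOn g (Set.Icc 0 a))
    (hg_nonneg : ∀ r ∈ Set.Icc 0 a, 0 ≤ g r) (hg_pos : ∀ r ∈ Set.Ioc 0 a, 0 < g r)
    (hg_div : ∫⁻ r in Set.Ioc (0 : ℝ) a, ENNReal.ofReal ((g r)⁻¹) = ⊤)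
    (h_ineq : ∀ᵐ t ∂(volume.restrict (Set.Icc t₀ T)),
        f t ≤ ∫ s in t₀..t, γ s * g (f s)) :
    ∀ᵐ t ∂(volume.restrict (Set.Icc t₀ T)), f t = 0 :=
  osgood_lemma_zero_general t₀ T a htT ha f γ g hf_meas hf_mem hγ_int hγ_nonneg hg_cont hg_mono
    hg_nonneg hg_pos hg_div h_ineq
end

section
/- (Logarithmic Grönwall estimate.) Let T > 0, K ≥ 0 and 0 < c ≤ e^{−2}. Let u : [0, T] → [0, e^{−2}] be continuous and satisfy u(t) ≤ c + K·∫₀^t (−u(s)·ln u(s)) ds for every t ∈ [0, T]. Then u(t) ≤ c^{exp(−K t)} for every t ∈ [0, T]. -/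
/-!
The majorant `v t = c + K ∫₀ᵗ -u ln u` dominates `u`, increases, and satisfies
`v' = K (-u ln u) ≤ K (-v ln v)` as long as `v ≤ e⁻¹`, because `r ↦ -r ln r` increases on
`[0, e⁻¹]`. Under this differential inequality `t ↦ e^{K t} ln v t` is nonincreasing, which is
exactly `v t ≤ c ^ e^{-K t}`. If this bound is at least `e⁻²` there is nothing to prove, since
`u ≤ e⁻²`; otherwise `v` stays below `e⁻¹` up to time `t`, for at a time `τ ≤ t` with
`v τ = e⁻¹` we would get `e⁻¹ ≤ c ^ e^{-K τ} ≤ c ^ e^{-K t} < e⁻²`.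
-/

open Real Set

lemma Real.monotoneOn_negMulLog : MonotoneOn negMulLog (Icc 0 (exp (-1))) := by
  refine monotoneOn_of_hasDerivWithinAt_nonneg (f' := fun x => -log x - 1) (convex_Icc _ _)
    continuous_negMulLog.continuousOn (fun x hx => ?_) (fun x hx => ?_) <;>
    rw [interior_Icc] at hx
  · exact (hasDerivAt_negMulLog hx.1.ne').hasDerivWithinAt
  · have := log_le_log hx.1 hx.2.le
    rw [log_exp] at this
    linarith

namespace ContinuousOn

variable {f : ℝ → ℝ} {a b : ℝ}

lemma continuousOn_primitive (hf : ContinuousOn f (Icc a b)) :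
    ContinuousOn (fun x => ∫ s in a..x, f s) (Icc a b) :=
  (intervalIntegral.continuousOn_primitive hf.integrableOn_Icc).congr fun _ hx =>
    intervalIntegral.integral_of_le hx.1

lemma hasDerivAt_primitive (hf : ContinuousOn f (Icc a b)) {t : ℝ} (ht : t ∈ Ioo a b) :
    HasDerivAt (fun x => ∫ s in a..x, f s) (f t) t :=
  intervalIntegral.integral_hasDerivAt_right
    ((hf.mono (Icc_subset_Icc_right ht.2.le)).intervalIntegrable_of_Icc ht.1.le)
    ((hf.mono Ioo_subset_Icc_self).stronglyMeasurableAtFilter isOpen_Ioo t ht)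
    (hf.continuousAt (Icc_mem_nhds ht.1 ht.2))

end ContinuousOn

section NegMulLogInequality

variable {v v' : ℝ → ℝ} {K a b : ℝ}

lemma antitoneOn_exp_mul_log_of_hasDerivAt_le_negMulLog (hv : ContinuousOn v (Icc a b))
    (hpos : ∀ t ∈ Icc a b, 0 < v t) (hv' : ∀ t ∈ Ioo a b, HasDerivAt v (v' t) t)
    (hle : ∀ t ∈ Ioo a b, v' t ≤ K * negMulLog (v t)) :
    AntitoneOn (fun t => exp (K * t) * log (v t)) (Icc a b) := by
  refine antitoneOn_of_hasDerivWithinAt_nonpos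
    (f' := fun t => exp (K * t) * (K * log (v t) + v' t / v t)) (convex_Icc a b)
    ((continuous_const.mul continuous_id).rexp.continuousOn.mul
      (hv.log fun t ht => (hpos t ht).ne')) (fun t ht => ?_) (fun t ht => ?_) <;>
    rw [interior_Icc] at ht <;>
    have hvt := hpos t (Ioo_subset_Icc_self ht)
  · have hexp : HasDerivAt (fun t => exp (K * t)) (exp (K * t) * K) t := by
      simpa using ((hasDerivAt_id t).const_mul K).exp
    exact (hexp.mul ((hv' t ht).log hvt.ne')).hasDerivWithinAt.congr_deriv (by ring)
  · have hquot : v' t / v t ≤ -(K * log (v t)) := by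
      rw [div_le_iff₀ hvt]
      calc v' t ≤ K * negMulLog (v t) := hle t ht
        _ = -(K * log (v t)) * v t := by rw [negMulLog]; ring
    exact mul_nonpos_of_nonneg_of_nonpos (exp_pos _).le (by linarith)

lemma le_rpow_exp_of_hasDerivAt_le_negMulLog (hab : a ≤ b) (hv : ContinuousOn v (Icc a b))
    (hpos : ∀ t ∈ Icc a b, 0 < v t) (hv' : ∀ t ∈ Ioo a b, HasDerivAt v (v' t) t)
    (hle : ∀ t ∈ Ioo a b, v' t ≤ K * negMulLog (v t)) :
    v b ≤ v a ^ exp (-(K * (b - a))) := by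
  have hg := antitoneOn_exp_mul_log_of_hasDerivAt_le_negMulLog hv hpos hv' hle
    (left_mem_Icc.2 hab) (right_mem_Icc.2 hab) hab
  have hlog : log (v b) ≤ log (v a) * exp (-(K * (b - a))) := calc
    log (v b) = exp (-(K * b)) * (exp (K * b) * log (v b)) := by
      rw [← mul_assoc, ← exp_add]; simp
    _ ≤ exp (-(K * b)) * (exp (K * a) * log (v a)) := by gcongr
    _ = log (v a) * exp (-(K * (b - a))) := by rw [← mul_assoc, ← exp_add]; ring_nf
  calc v b = exp (log (v b)) := (exp_log (hpos b (right_mem_Icc.2 hab))).symm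
    _ ≤ exp (log (v a) * exp (-(K * (b - a)))) := exp_le_exp.2 hlog
    _ = v a ^ exp (-(K * (b - a))) := (rpow_def_of_pos (hpos a (left_mem_Icc.2 hab)) _).symm

end NegMulLogInequality

noncomputable def gronwallMajorant (c K : ℝ) (u : ℝ → ℝ) (t : ℝ) : ℝ :=
  c + K * ∫ s in (0 : ℝ)..t, negMulLog (u s)

namespace gronwallMajorant

@[simp]
lemma apply_zero (c K : ℝ) (u : ℝ → ℝ) : gronwallMajorant c K u 0 = c := by
  simp [gronwallMajorant]

lemma continuousOn (hu : ContinuousOn u (Icc 0 T)) :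
    ContinuousOn (gronwallMajorant c K u) (Icc 0 T) :=
  continuousOn_const.add
    ((continuous_negMulLog.comp_continuousOn hu).continuousOn_primitive.const_smul K)

lemma hasDerivAt (hu : ContinuousOn u (Icc 0 T)) {t : ℝ} (ht : t ∈ Ioo 0 T) :
    HasDerivAt (gronwallMajorant c K u) (K * negMulLog (u t)) t :=
  (((continuous_negMulLog.comp_continuousOn hu).hasDerivAt_primitive ht).const_mul K).const_add c

lemma monotoneOn (hK : 0 ≤ K) (hu : ContinuousOn u (Icc 0 T))
    (hu_mem : ∀ t ∈ Icc 0 T, u t ∈ Icc 0 1) : MonotoneOn (gronwallMajorant c K u) (Icc 0 T) :=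
  monotoneOn_of_hasDerivWithinAt_nonneg (convex_Icc 0 T) (continuousOn hu)
    (by rw [interior_Icc]; exact fun t ht => (hasDerivAt hu ht).hasDerivWithinAt)
    fun t ht => mul_nonneg hK
      (negMulLog_nonneg (hu_mem t (interior_subset ht)).1 (hu_mem t (interior_subset ht)).2)

lemma le_rpow_exp (hK : 0 ≤ K) (hc : 0 < c) (hu : ContinuousOn u (Icc 0 T))
    (hu_mem : ∀ t ∈ Icc 0 T, u t ∈ Icc 0 (exp (-1)))
    (hu_le : ∀ t ∈ Icc 0 T, u t ≤ gronwallMajorant c K u t) {t : ℝ} (ht : t ∈ Icc 0 T)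
    (hvt : gronwallMajorant c K u t ≤ exp (-1)) :
    gronwallMajorant c K u t ≤ c ^ exp (-(K * t)) := by
  have hsub : Icc 0 t ⊆ Icc 0 T := Icc_subset_Icc_right ht.2
  have hmono := monotoneOn (c := c) hK hu fun s hs =>
    Icc_subset_Icc_right (exp_le_one_iff.2 (by norm_num)) (hu_mem s hs)
  have hc_le : ∀ s ∈ Icc 0 t, c ≤ gronwallMajorant c K u s := fun s hs =>
    (apply_zero c K u).symm.le.trans (hmono (left_mem_Icc.2 (ht.1.trans ht.2)) (hsub hs) hs.1)
  have hderiv_le : ∀ s ∈ Ioo 0 t,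
      K * negMulLog (u s) ≤ K * negMulLog (gronwallMajorant c K u s) := fun s hs => by
    have hs' := hsub (Ioo_subset_Icc_self hs)
    exact mul_le_mul_of_nonneg_left (monotoneOn_negMulLog (hu_mem s hs')
      ⟨hc.le.trans (hc_le s (Ioo_subset_Icc_self hs)), (hmono hs' ht hs.2.le).trans hvt⟩
      (hu_le s hs')) hK
  simpa using le_rpow_exp_of_hasDerivAt_le_negMulLog ht.1 ((continuousOn hu).mono hsub)
    (fun s hs => hc.trans_le (hc_le s hs))
    (fun s hs => hasDerivAt hu (Ioo_subset_Ioo_right ht.2 hs)) hderiv_le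

end gronwallMajorant

theorem log_gronwall_general
    (T K c : ℝ) (hK : 0 ≤ K) (hc0 : 0 < c) (hc : c ≤ Real.exp (-2))
    (u : ℝ → ℝ) (hu_cont : ContinuousOn u (Set.Icc 0 T))
    (hu_mem : ∀ t ∈ Set.Icc (0 : ℝ) T, u t ∈ Set.Icc (0 : ℝ) (Real.exp (-2)))
    (h_ineq : ∀ t ∈ Set.Icc (0 : ℝ) T,
        u t ≤ c + K * ∫ s in (0 : ℝ)..t, -(u s * Real.log (u s))) :
    ∀ t ∈ Set.Icc (0 : ℝ) T, u t ≤ c ^ Real.exp (-(K * t)) := by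
  set v := gronwallMajorant c K u
  have he : exp (-2) < exp (-1) := exp_lt_exp.2 (by norm_num)
  have hu_le_v : ∀ t ∈ Icc 0 T, u t ≤ v t := by
    simpa only [v, gronwallMajorant, negMulLog_eq_neg] using h_ineq
  have hv_le_rpow : ∀ t ∈ Icc 0 T, v t ≤ exp (-1) → v t ≤ c ^ exp (-(K * t)) :=
    fun t ht => gronwallMajorant.le_rpow_exp hK hc0 hu_cont
      (fun s hs => Icc_subset_Icc_right he.le (hu_mem s hs)) hu_le_v ht
  intro t ht
  by_cases hw : exp (-2) ≤ c ^ exp (-(K * t))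
  · exact (hu_mem t ht).2.trans hw
  have hvt : v t ≤ exp (-1) := by
    by_contra! hvt
    obtain ⟨τ, hτ, hvτ⟩ := intermediate_value_Icc ht.1
      ((gronwallMajorant.continuousOn hu_cont).mono (Icc_subset_Icc_right ht.2))
      ⟨(gronwallMajorant.apply_zero c K u).le.trans (hc.trans he.le), hvt.le⟩
    have : exp (-1) ≤ c ^ exp (-(K * t)) := calc
      exp (-1) = v τ := hvτ.symm
      _ ≤ c ^ exp (-(K * τ)) := hv_le_rpow τ ⟨hτ.1, hτ.2.trans ht.2⟩ hvτ.le
      _ ≤ c ^ exp (-(K * t)) := rpow_le_rpow_of_exponent_ge hc0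
        (hc.trans (exp_le_one_iff.2 (by norm_num))) (by gcongr; exact hτ.2)
    linarith
  exact (hu_le_v t ht).trans (hv_le_rpow t ht hvt)

/-- Logarithmic Grönwall estimate: if `u : [0,T] → [0, e⁻²]` is continuous with
`u(t) ≤ c + K ∫₀ᵗ (-u(s) ln u(s)) ds` for `0 < c ≤ e⁻²`, then
`u(t) ≤ c ^ exp(-K t)`. -/
theorem log_gronwall
    (T K c : ℝ) (hT : 0 < T) (hK : 0 ≤ K) (hc0 : 0 < c) (hc : c ≤ Real.exp (-2))
    (u : ℝ → ℝ) (hu_cont : ContinuousOn u (Set.Icc 0 T))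
    (hu_mem : ∀ t ∈ Set.Icc (0 : ℝ) T, u t ∈ Set.Icc (0 : ℝ) (Real.exp (-2)))
    (h_ineq : ∀ t ∈ Set.Icc (0 : ℝ) T,
        u t ≤ c + K * ∫ s in (0 : ℝ)..t, -(u s * Real.log (u s))) :
    ∀ t ∈ Set.Icc (0 : ℝ) T, u t ≤ c ^ Real.exp (-(K * t)) :=
  log_gronwall_general T K c hK hc0 hc u hu_cont hu_mem h_ineq
end
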